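/- Let λ₁,…,λ_K > 0 with geometric mean g = (∏ᵢ λᵢ)^{1/K}. Define the exact per-user MMSE ε²(γ) = (1/K)∑ᵢ 1/(1+γλᵢ) and the approximation ε̂²(γ) = 1/(1+γg). Then there exists γ* > 0 at which ε²(γ*) = ε̂²(γ*), provided the λᵢ are not all equal (otherwise they coincide everywhere). -/

import Mathlib

/-!
With `b` the geometric mean of the `aᵢ`, the gap `∑ᵢ (1/(1+γaᵢ) - 1/(1+γb))` equals
`γ ∑ᵢ (b - aᵢ)/((1+γaᵢ)(1+γb))`, so for small `γ > 0` its sign is that of `K b - ∑ aᵢ < 0`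
(strict AM-GM). Substituting `γ = t⁻¹` it equals `t ∑ᵢ (b - aᵢ)/((t+aᵢ)(t+b))`, so for large `γ`
its sign is that of `∑ 1/aᵢ - K/b > 0` (strict AM-GM for the `1/aᵢ`). The intermediate value
theorem gives a zero in between.
-/

open Finset Filter Topology

section GeomMean

variable {ι : Type*} [Fintype ι]

theorem card_mul_geom_mean_lt_sum (z : ι → ℝ) (hz : ∀ i, 0 ≤ z i)
    (hne : ∃ j k, z j ≠ z k) :
    Fintype.card ι * (∏ i, z i) ^ (1 / Fintype.card ι : ℝ) < ∑ i, z i := by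
  obtain ⟨j, k, hjk⟩ := hne
  have hcard : (0 : ℝ) < Fintype.card ι := by
    have : Nonempty ι := ⟨j⟩
    positivity
  have amgm := (Real.geom_mean_lt_arith_mean_weighted_iff_of_pos univ (fun _ ↦ 1 / Fintype.card ι)
    z (fun _ _ ↦ by positivity) (by simp [hcard.ne']) (fun i _ ↦ hz i)).2
    ⟨j, mem_univ _, k, mem_univ _, hjk⟩
  rw [Real.finsetProd_rpow _ _ (fun i _ ↦ hz i), ← mul_sum] at amgm
  calc _ < Fintype.card ι * (1 / Fintype.card ι * ∑ i, z i) := by gcongr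
    _ = ∑ i, z i := by field_simp

theorem card_div_geom_mean_lt_sum_one_div (z : ι → ℝ) (hz : ∀ i, 0 < z i)
    (hne : ∃ j k, z j ≠ z k) :
    Fintype.card ι / (∏ i, z i) ^ (1 / Fintype.card ι : ℝ) < ∑ i, 1 / z i := by
  obtain ⟨j, k, hjk⟩ := hne
  have := card_mul_geom_mean_lt_sum (fun i ↦ 1 / z i) (fun i ↦ (one_div_pos.2 (hz i)).le)
    ⟨j, k, by simpa using hjk⟩
  rwa [prod_div_distrib, prod_const_one,
    Real.div_rpow zero_le_one (prod_nonneg fun i _ ↦ (hz i).le), Real.one_rpow,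
    ← div_eq_mul_one_div] at this

end GeomMean

section MmseGap

variable {ι : Type*} [Fintype ι] (a : ι → ℝ) (b : ℝ)

/-- `K (ε²(γ) - ε̂²(γ))` when `b` is the geometric mean `g` of the eigenvalues `a`. -/
noncomputable def mmseGap (γ : ℝ) : ℝ := ∑ i, (1 / (1 + γ * a i) - 1 / (1 + γ * b))

variable {a b}

theorem mmseGap_eq_mul_sum (ha : ∀ i, 0 ≤ a i) (hb : 0 ≤ b) {γ : ℝ} (hγ : 0 ≤ γ) :
    mmseGap a b γ = γ * ∑ i, (b - a i) / ((1 + γ * a i) * (1 + γ * b)) := by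
  rw [mmseGap, mul_sum]
  refine sum_congr rfl fun i _ ↦ ?_
  have := ha i
  field_simp
  ring

theorem mmseGap_inv_eq_mul_sum (ha : ∀ i, 0 ≤ a i) (hb : 0 ≤ b) {t : ℝ} (ht : 0 < t) :
    mmseGap a b t⁻¹ = t * ∑ i, (b - a i) / ((t + a i) * (t + b)) := by
  rw [mmseGap_eq_mul_sum ha hb (inv_nonneg.2 ht.le), mul_sum, mul_sum]
  refine sum_congr rfl fun i _ ↦ ?_
  have := ha i
  field_simp

theorem eventually_mmseGap_neg (ha : ∀ i, 0 ≤ a i) (hb : 0 ≤ b)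
    (h : Fintype.card ι * b < ∑ i, a i) : ∀ᶠ γ in 𝓝[>] 0, mmseGap a b γ < 0 := by
  set F : ℝ → ℝ := fun γ ↦ ∑ i, (b - a i) / ((1 + γ * a i) * (1 + γ * b))
  have hF0 : F 0 < 0 := by simpa [F, sum_sub_distrib] using h
  have hF : ContinuousAt F 0 := by fun_prop (disch := simp)
  filter_upwards [nhdsWithin_le_nhds (hF.eventually (eventually_lt_nhds hF0)),
    self_mem_nhdsWithin] with γ hFγ (hγ : 0 < γ)
  rw [mmseGap_eq_mul_sum ha hb hγ.le]
  exact mul_neg_of_pos_of_neg hγ hFγ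

theorem eventually_mmseGap_pos (ha : ∀ i, 0 < a i) (hb : 0 < b)
    (h : Fintype.card ι / b < ∑ i, 1 / a i) : ∀ᶠ γ in atTop, 0 < mmseGap a b γ := by
  set G : ℝ → ℝ := fun t ↦ ∑ i, (b - a i) / ((t + a i) * (t + b))
  have hG0 : 0 < G 0 := by
    have hterm : ∀ i, (b - a i) / (a i * b) = 1 / a i - 1 / b := fun i ↦ by
      have := (ha i).ne'
      field_simp
    simp only [G, zero_add, hterm, sum_sub_distrib, sum_const, card_univ, nsmul_eq_mul]
    rwa [sub_pos, ← div_eq_mul_one_div]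
  have hG : ContinuousAt G 0 := by
    fun_prop (disch := exact mul_ne_zero (by simpa using (ha _).ne') (by simpa using hb.ne'))
  have hG' : ∀ᶠ t in 𝓝[>] 0, 0 < mmseGap a b t⁻¹ := by
    filter_upwards [nhdsWithin_le_nhds (hG.eventually (eventually_gt_nhds hG0)),
      self_mem_nhdsWithin] with t hGt (ht : 0 < t)
    rw [mmseGap_inv_eq_mul_sum (fun i ↦ (ha i).le) hb.le ht]
    exact mul_pos ht hGt
  simpa using tendsto_inv_atTop_nhdsGT_zero.eventually hG'

theorem continuousOn_mmseGap (ha : ∀ i, 0 ≤ a i) (hb : 0 ≤ b) :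
    ContinuousOn (mmseGap a b) (Set.Ici 0) := by
  unfold mmseGap
  fun_prop (disch := intro γ (hγ : 0 ≤ γ); first | have := ha ‹_›; positivity | positivity)

theorem exists_pos_mmseGap_eq_zero (ha : ∀ i, 0 < a i) (hb : 0 < b)
    (h₀ : Fintype.card ι * b < ∑ i, a i) (h_top : Fintype.card ι / b < ∑ i, 1 / a i) :
    ∃ γ, 0 < γ ∧ mmseGap a b γ = 0 := by
  obtain ⟨γ₀, hγ₀, hγ₀_pos : 0 < γ₀⟩ :=
    ((eventually_mmseGap_neg (fun i ↦ (ha i).le) hb.le h₀).and self_mem_nhdsWithin).exists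
  obtain ⟨γ₁, hγ₁, hγ₀₁⟩ :=
    ((eventually_mmseGap_pos ha hb h_top).and (eventually_ge_atTop γ₀)).exists
  have hcont : ContinuousOn (mmseGap a b) (Set.Icc γ₀ γ₁) :=
    (continuousOn_mmseGap (fun i ↦ (ha i).le) hb.le).mono fun γ hγ ↦ hγ₀_pos.le.trans hγ.1
  obtain ⟨γ, hγ, hγ_zero⟩ := intermediate_value_Icc hγ₀₁ hcont ⟨hγ₀.le, hγ₁.le⟩
  exact ⟨γ, hγ₀_pos.trans_le hγ.1, hγ_zero⟩

end MmseGap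

theorem mmse_approximation_crossing_point_general
    (K : ℕ) (lam : Fin K → ℝ) (hlam : ∀ i, 0 < lam i)
    (hne : ¬ ∀ i j, lam i = lam j) :
    let g : ℝ := (∏ i, lam i) ^ ((1 : ℝ) / K)
    ∃ γ : ℝ, 0 < γ ∧
      (1 / K : ℝ) * ∑ i, 1 / (1 + γ * lam i) = 1 / (1 + γ * g) := by
  intro g
  push Not at hne
  have hK : (K : ℝ) ≠ 0 := by
    obtain ⟨j, -⟩ := hne
    exact_mod_cast j.pos.ne'
  have hg : 0 < g := Real.rpow_pos_of_pos (prod_pos fun i _ ↦ hlam i) _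
  obtain ⟨γ, hγ, hgap⟩ := exists_pos_mmseGap_eq_zero hlam hg
    (by simpa [g] using card_mul_geom_mean_lt_sum lam (fun i ↦ (hlam i).le) hne)
    (by simpa [g] using card_div_geom_mean_lt_sum_one_div lam hlam hne)
  refine ⟨γ, hγ, ?_⟩
  rw [mmseGap, sum_sub_distrib, sum_const, card_univ, Fintype.card_fin, nsmul_eq_mul,
    sub_eq_zero] at hgap
  rw [hgap]
  field_simp

theorem mmse_approximation_crossing_point
    (K : ℕ) (hK : 0 < K) (lam : Fin K → ℝ) (hlam : ∀ i, 0 < lam i)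
    (hne : ¬ ∀ i j, lam i = lam j) :
    let g : ℝ := (∏ i, lam i) ^ ((1 : ℝ) / K)
    ∃ γ : ℝ, 0 < γ ∧
      (1 / K : ℝ) * ∑ i, 1 / (1 + γ * lam i) = 1 / (1 + γ * g) :=
  mmse_approximation_crossing_point_general K lam hlam hne
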